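/- Let a₁,…,a_k be nonzero vectors in ℝⁿ, let L be their linear span, let A = (1/k)·Σᵢ aᵢaᵢᵀ/|aᵢ|², and let λ be the smallest positive eigenvalue of A. For x ∈ ℝⁿ, let y and z denote the orthogonal projections of x onto Lᗮ and L respectively. Then the average over i ∈ {1,…,k} of |x − (aᵢᵀx/|aᵢ|²)·aᵢ − y|² equals |z|² − zᵀAz, and this is at most (1 − λ)·|z|². -/

import Mathlib

/-!
Since every `aᵢ` lies in `L`, the step `x ↦ x - (⟪aᵢ, x⟫ / ‖aᵢ‖²) aᵢ` does not see `y`, and the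
`i`-th term is `‖z - Pᵢ z‖² = ‖z‖² - ⟪aᵢ, z⟫² / ‖aᵢ‖²`, with `Pᵢ` the projection onto `ℝ aᵢ`;
averaging gives `‖z‖² - ⟪A z, z⟫`. The operator `A` is positive and its kernel is orthogonal to
`L`, so expanding `z ∈ L` in an orthonormal eigenbasis of `A` only eigenvalues `≥ λ` contribute,
whence `⟪A z, z⟫ ≥ λ ‖z‖²`.
-/

open Matrix InnerProductSpace
open scoped RealInnerProductSpace

section
variable {E : Type*} [NormedAddCommGroup E] [InnerProductSpace ℝ E]

theorem norm_sub_inner_div_smul_sq (a z : E) :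
    ‖z - (⟪a, z⟫ / ‖a‖ ^ 2) • a‖ ^ 2 = ‖z‖ ^ 2 - ⟪a, z⟫ ^ 2 / ‖a‖ ^ 2 := by
  rcases eq_or_ne a 0 with rfl | ha
  · simp
  have : ‖a‖ ≠ 0 := norm_ne_zero_iff.mpr ha
  rw [norm_sub_sq_real, real_inner_smul_right, norm_smul, Real.norm_eq_abs, mul_pow, sq_abs,
    real_inner_comm]
  field_simp
  ring

theorem Submodule.sub_inner_div_smul_sub_starProjection_orthogonal (K : Submodule ℝ E)
    [K.HasOrthogonalProjection] {a : E} (ha : a ∈ K) (x : E) :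
    x - (⟪a, x⟫ / ‖a‖ ^ 2) • a - Kᗮ.starProjection x =
      K.starProjection x - (⟪a, K.starProjection x⟫ / ‖a‖ ^ 2) • a := by
  have hx : ⟪a, x⟫ = ⟪a, K.starProjection x⟫ := by
    have := Submodule.inner_right_of_mem_orthogonal ha (K.sub_starProjection_mem_orthogonal x)
    rwa [inner_sub_right, sub_eq_zero] at this
  rw [K.starProjection_orthogonal', _root_.sub_apply, one_apply_eq_self, hx]
  abel

theorem LinearMap.IsPositive.mul_norm_sq_le_inner [FiniteDimensional ℝ E] {T : E →ₗ[ℝ] E}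
    (hT : T.IsPositive) {lam : ℝ}
    (hlam : ∀ μ, 0 < μ → Module.End.HasEigenvalue T μ → lam ≤ μ)
    {z : E} (hz : z ∈ (LinearMap.ker T)ᗮ) :
    lam * ‖z‖ ^ 2 ≤ ⟪T z, z⟫ := by
  set b := hT.isSymmetric.eigenvectorBasis rfl
  set μ := hT.isSymmetric.eigenvalues rfl
  have hTb (i) : T (b i) = μ i • b i := hT.isSymmetric.apply_eigenvectorBasis rfl i
  have hnorm : ‖z‖ ^ 2 = ∑ i, ⟪b i, z⟫ ^ 2 := by
    rw [← real_inner_self_eq_norm_sq, ← b.sum_inner_mul_inner]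
    simp only [real_inner_comm z, sq]
  have hquad : ⟪T z, z⟫ = ∑ i, μ i * ⟪b i, z⟫ ^ 2 := by
    rw [← b.sum_inner_mul_inner]
    refine Finset.sum_congr rfl fun i _ => ?_
    rw [hT.isSymmetric, hTb, real_inner_smul_right, real_inner_comm z]
    ring
  rw [hnorm, hquad, Finset.mul_sum]
  refine Finset.sum_le_sum fun i _ => ?_
  have hμ_nonneg : 0 ≤ μ i := hT.nonneg_eigenvalues rfl i
  rcases hμ_nonneg.eq_or_lt with hμ | hμ
  · have hbz : ⟪b i, z⟫ = 0 :=
      Submodule.inner_right_of_mem_orthogonal (by rw [LinearMap.mem_ker, hTb, ← hμ, zero_smul]) hz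
    simp [hbz]
  · exact mul_le_mul_of_nonneg_right
      (hlam _ hμ (hT.isSymmetric.hasEigenvalue_eigenvalues rfl i)) (sq_nonneg _)

end

section
variable {m : Type*} [Fintype m] [DecidableEq m]

theorem Matrix.inner_toEuclideanLin_eq_dotProduct (M : Matrix m m ℝ) (v w : EuclideanSpace ℝ m) :
    ⟪toEuclideanLin M w, v⟫ = v.ofLp ⬝ᵥ M *ᵥ w.ofLp := by
  rw [EuclideanSpace.inner_eq_star_dotProduct, star_trivial]
  rfl

theorem Matrix.exists_mulVec_eq_smul_of_hasEigenvalue {M : Matrix m m ℝ} {μ : ℝ}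
    (h : Module.End.HasEigenvalue (toEuclideanLin M) μ) :
    ∃ v : m → ℝ, v ≠ 0 ∧ M *ᵥ v = μ • v := by
  obtain ⟨v, hv⟩ := h.exists_hasEigenvector
  exact ⟨v.ofLp, by simpa using hv.2, congrArg WithLp.ofLp (Module.End.mem_eigenspace_iff.mp hv.1)⟩

end

section
variable {ι E : Type*} [Fintype ι] [NormedAddCommGroup E] [InnerProductSpace ℝ E]

noncomputable def balancingOperator (a : ι → E) : E →L[ℝ] E :=
  (1 / Fintype.card ι : ℝ) • ∑ i, (‖a i‖ ^ 2)⁻¹ • rankOne ℝ (a i) (a i)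

theorem inner_balancingOperator_self (a : ι → E) (v : E) :
    ⟪balancingOperator a v, v⟫ = 1 / Fintype.card ι * ∑ i, ⟪a i, v⟫ ^ 2 / ‖a i‖ ^ 2 := by
  simp only [balancingOperator, _root_.smul_apply, _root_.sum_apply, rankOne_apply,
    real_inner_smul_left, sum_inner]
  congr 1
  exact Finset.sum_congr rfl fun i _ => by ring

theorem isPositive_balancingOperator (a : ι → E) : (balancingOperator a).IsPositive :=
  (ContinuousLinearMap.isPositive_sum _ fun i _ =>
    (isPositive_rankOne_self (a i)).smul_of_nonneg (by positivity)).smul_of_nonneg (by positivity)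

theorem span_range_le_orthogonal_ker_balancingOperator (a : ι → E) :
    Submodule.span ℝ (Set.range a) ≤ (LinearMap.ker (balancingOperator a : E →ₗ[ℝ] E))ᗮ := by
  refine Submodule.span_le.mpr (Set.range_subset_iff.mpr fun i => ?_)
  refine (Submodule.mem_orthogonal' _ _).mpr fun v hv => ?_
  have : Nonempty ι := ⟨i⟩
  have hk : (Fintype.card ι : ℝ) ≠ 0 := Nat.cast_ne_zero.mpr Fintype.card_ne_zero
  have hsum : ∑ j, ⟪a j, v⟫ ^ 2 / ‖a j‖ ^ 2 = 0 := by
    have hTv : balancingOperator a v = 0 := hv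
    have := inner_balancingOperator_self a v
    rw [hTv, inner_zero_left, eq_comm, mul_eq_zero] at this
    simpa [hk] using this
  rw [Finset.sum_eq_zero_iff_of_nonneg fun j _ => by positivity] at hsum
  rcases div_eq_zero_iff.mp (hsum i (Finset.mem_univ i)) with h | h
  · exact pow_eq_zero_iff two_ne_zero |>.mp h
  · rw [pow_eq_zero_iff two_ne_zero, norm_eq_zero] at h
    rw [h, inner_zero_left]

theorem average_norm_sub_inner_div_smul_sq [Nonempty ι] (a : ι → E) (z : E) :
    1 / Fintype.card ι * ∑ i, ‖z - (⟪a i, z⟫ / ‖a i‖ ^ 2) • a i‖ ^ 2 =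
      ‖z‖ ^ 2 - ⟪balancingOperator a z, z⟫ := by
  simp only [norm_sub_inner_div_smul_sq, Finset.sum_sub_distrib, Finset.sum_const,
    Finset.card_univ, nsmul_eq_mul, inner_balancingOperator_self]
  field_simp

theorem toEuclideanLin_symm_balancingOperator {m : Type*} [Fintype m] [DecidableEq m]
    (a : ι → EuclideanSpace ℝ m) :
    toEuclideanLin.symm (balancingOperator a : _ →ₗ[ℝ] _) =
      (1 / Fintype.card ι : ℝ) • ∑ i, (‖a i‖ ^ 2)⁻¹ • vecMulVec (a i).ofLp (a i).ofLp := by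
  simp [balancingOperator, symm_toEuclideanLin_rankOne]

end

theorem stmt6 {n k : ℕ} (hk : 0 < k) (a : Fin k → EuclideanSpace ℝ (Fin n))
    (L : Submodule ℝ (EuclideanSpace ℝ (Fin n)))
    (hL : L = Submodule.span ℝ (Set.range a))
    (A : Matrix (Fin n) (Fin n) ℝ)
    (hA : A = (1 / (k : ℝ)) • ∑ i, (‖a i‖ ^ 2)⁻¹ • vecMulVec (a i) (a i))
    (lam : ℝ)
    (hlam_min : ∀ mu : ℝ, 0 < mu → (∃ v : Fin n → ℝ, v ≠ 0 ∧ A.mulVec v = mu • v) →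
      lam ≤ mu)
    (x : EuclideanSpace ℝ (Fin n)) :
    letI y : EuclideanSpace ℝ (Fin n) := Submodule.orthogonalProjectionOnto Lᗮ x
    letI z : EuclideanSpace ℝ (Fin n) := Submodule.orthogonalProjectionOnto L x
    (1 / (k : ℝ)) * ∑ i, ‖x - (⟪a i, x⟫ / ‖a i‖ ^ 2) • a i - y‖ ^ 2 =
        ‖z‖ ^ 2 - z ⬝ᵥ A.mulVec z ∧
      ‖z‖ ^ 2 - z ⬝ᵥ A.mulVec z ≤ (1 - lam) * ‖z‖ ^ 2 := by
  have : Nonempty (Fin k) := ⟨⟨0, hk⟩⟩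
  have hAT : toEuclideanLin A = (balancingOperator a : _ →ₗ[ℝ] _) := by
    rw [← LinearEquiv.eq_symm_apply, toEuclideanLin_symm_balancingOperator, Fintype.card_fin, hA]
  have haL (i) : a i ∈ L := hL ▸ Submodule.subset_span (Set.mem_range_self i)
  simp only [Submodule.coe_orthogonalProjectionOnto_apply,
    L.sub_inner_div_smul_sub_starProjection_orthogonal (haL _)]
  set z := L.starProjection x
  have hzL : z ∈ Submodule.span ℝ (Set.range a) := hL ▸ L.starProjection_apply_mem x
  have hlow : lam * ‖z‖ ^ 2 ≤ ⟪balancingOperator a z, z⟫ :=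
    (isPositive_balancingOperator a).toLinearMap.mul_norm_sq_le_inner
      (fun μ hμ hev => hlam_min μ hμ (exists_mulVec_eq_smul_of_hasEigenvalue (by rwa [hAT])))
      (span_range_le_orthogonal_ker_balancingOperator a hzL)
  have havg := average_norm_sub_inner_div_smul_sq a z
  rw [Fintype.card_fin] at havg
  rw [← inner_toEuclideanLin_eq_dotProduct, hAT, ContinuousLinearMap.coe_coe]
  exact ⟨havg, by linarith⟩
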